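/- If a composite φ = χ ∘ ψ of cofibrations in combinatorial 2-Cob has both φ and ψ in the image of the functor Φ from oriented 1-Cob, then χ is also in the image of Φ: its genus function is zero and its structure maps satisfy the five local conditions of an oriented 1-cobordism with appropriate signs. -/

import Mathlib

open scoped Classical

/-- The relation generating the pushout of a span `A ← k → B` of (finite) sets. -/
def PRel {k A B : Type} (f : k → A) (g : k → B) : A ⊕ B → A ⊕ B → Prop :=
  fun x y => ∃ z, x = Sum.inl (f z) ∧ y = Sum.inr (g z)

/-- The pushout of the span `A ← k → B`. -/
def Pushout {k A B : Type} (f : k → A) (g : k → B) : Type :=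
  Quot (PRel f g)

/-- Canonical map `ι_A : A → A ⊔_k B`. -/
def pInl {k A B : Type} (f : k → A) (g : k → B) (a : A) : Pushout f g :=
  Quot.mk _ (Sum.inl a)

/-- Canonical map `ι_B : B → A ⊔_k B`. -/
def pInr {k A B : Type} (f : k → A) (g : k → B) (b : B) : Pushout f g :=
  Quot.mk _ (Sum.inr b)

instance {k A B : Type} (f : k → A) (g : k → B) [Finite A] [Finite B] :
    Finite (Pushout f g) :=
  Quot.finite _

noncomputable instance {k A B : Type} (f : k → A) (g : k → B) [Fintype A] [Fintype B] :
    Fintype (Pushout f g) :=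
  Fintype.ofFinite _

/-- The genus formula of Definition 3.4:
`g(x) = 1 + Σ_{ι_A(a)=x}(g₁(a)−1) + Σ_{ι_B(b)=x}(g₂(b)−1) + #{y ∈ k : y ↦ x}`. -/
noncomputable def compGenus {k A B : Type} [Fintype k] [Fintype A] [Fintype B]
    (f : k → A) (g : k → B) (g1 : A → ℤ) (g2 : B → ℤ) (x : Pushout f g) : ℤ :=
  1 + (∑ a ∈ Finset.univ.filter (fun a => pInl f g a = x), (g1 a - 1))
    + (∑ b ∈ Finset.univ.filter (fun b => pInr f g b = x), (g2 b - 1))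
    + ((Finset.univ.filter (fun y : k => pInl f g (f y) = x)).card : ℤ)

/-- A combinatorial 2-cobordism from the finite set `m` to the finite set `n`. -/
structure Cob (m n : Type) : Type 1 where
  C : Type
  [fin : Fintype C]
  lm : m → C
  ln : n → C
  g : C → ℕ

attribute [instance] Cob.fin

/-- Composition of combinatorial 2-cobordisms via pushout of component sets
and the genus formula of Definition 3.4. -/
noncomputable def Cob.comp {m k n : Type} [Fintype k] (ψ : Cob k n) (φ : Cob m k) :
    Cob m n where
  C := Pushout φ.ln ψ.lm
  lm := fun x => pInl φ.ln ψ.lm (φ.lm x)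
  ln := fun y => pInr φ.ln ψ.lm (ψ.ln y)
  g := fun x =>
    (compGenus φ.ln ψ.lm (fun a => (φ.g a : ℤ)) (fun b => (ψ.g b : ℤ)) x).toNat

/-- Equivalence of combinatorial 2-cobordisms: a bijection of component sets
intertwining the structure maps and the genus functions. -/
def Cob.Equiv {m n : Type} (φ φ' : Cob m n) : Prop :=
  ∃ χ : φ.C ≃ φ'.C,
    (∀ x, χ (φ.lm x) = φ'.lm x) ∧ (∀ y, χ (φ.ln y) = φ'.ln y) ∧
    (∀ c, φ'.g (χ c) = φ.g c)

/-- A cofibration: `l_n` is injective and `l_n` lifts through `l_m`. -/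
def Cob.IsCofib {m n : Type} (φ : Cob m n) : Prop :=
  Function.Injective φ.ln ∧ ∃ u : n → m, ∀ y, φ.lm (u y) = φ.ln y

/-- A fibration: `l_m` is injective, `l_n` is surjective, and `g ∘ l_m = 0`. -/
def Cob.IsFib {m n : Type} (φ : Cob m n) : Prop :=
  Function.Injective φ.lm ∧ Function.Surjective φ.ln ∧ ∀ x, φ.g (φ.lm x) = 0

/-- The five local conditions of Definition 5.2.1 defining an oriented 1-cobordism
between signed finite sets (signs recorded by Boolean functions, `true` = `+`). -/
def IsOriented {m n C : Type} (sm : m → Bool) (sn : n → Bool)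
    (lm : m → C) (ln : n → C) : Prop :=
  ∀ c : C,
    (∃ a b : m, sm a = true ∧ sm b = false ∧ a ≠ b ∧
      (∀ x, lm x = c ↔ (x = a ∨ x = b)) ∧ (∀ y, ln y ≠ c)) ∨
    (∃ a b : n, sn a = true ∧ sn b = false ∧ a ≠ b ∧
      (∀ y, ln y = c ↔ (y = a ∨ y = b)) ∧ (∀ x, lm x ≠ c)) ∨
    (∃ a : m, ∃ b : n, sm a = sn b ∧
      (∀ x, lm x = c ↔ x = a) ∧ (∀ y, ln y = c ↔ y = b)) ∨
    ((∀ x, lm x ≠ c) ∧ (∀ y, ln y ≠ c))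

/-!
Since `ψ` is a cofibration in the image of `Φ`, each outgoing point `z` of `ψ` shares its
component with exactly one incoming point `v z`, of the same sign, and `v` is injective.
Gluing along the injective map `ψ.ln` therefore does not identify any two components of `χ`:
the pushout contains `χ.C` via `ι_B`, the incoming points of `χ ∘ ψ` lying over a component `c`
of `χ` are the `v z` with `χ.lm z = c`, and its outgoing points over `c` are those of `χ`.
The genus formula at `c` reduces to `χ.g c` because each genus-zero component of `ψ` glued to `c`
contributes `-1`, cancelled by the one point of `k` attaching it. So `χ` inherits both genus zero
and the local conditions from `χ ∘ ψ`.
-/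

open Function

section Pushout

variable {k A B : Type} {f : k → A} (g : k → B)

/-- Well defined because `f` is injective; it sends `ι_A a` to `none` exactly for `a ∉ range f`. -/
noncomputable def Pushout.projRight (hf : Injective f) : Pushout f g → Option B :=
  Quot.lift (Sum.elim (extend f (some ∘ g) fun _ => none) some) <| by
    rintro _ _ ⟨z, rfl, rfl⟩
    exact hf.extend_apply (some ∘ g) (fun _ => none) z

theorem pInr_injective (hf : Injective f) : Injective (pInr f g) := fun _ _ h =>
  Option.some_injective _ (congrArg (Pushout.projRight g hf) h)

theorem pInl_eq_pInr_iff (hf : Injective f) (a : A) (b : B) :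
    pInl f g a = pInr f g b ↔ ∃ z, f z = a ∧ g z = b := by
  refine ⟨fun h => ?_, fun ⟨z, hza, hzb⟩ => hza ▸ hzb ▸ Quot.sound ⟨z, rfl, rfl⟩⟩
  have h' : extend f (some ∘ g) (fun _ => none) a = some b := congrArg (Pushout.projRight g hf) h
  by_cases ha : ∃ z, f z = a
  · obtain ⟨z, rfl⟩ := ha
    rw [hf.extend_apply] at h'
    exact ⟨z, rfl, Option.some_injective _ h'⟩
  · rw [extend_apply' _ _ _ ha] at h'
    exact absurd h' (Option.some_ne_none b).symm

theorem pInl_apply_eq_pInr_iff (hf : Injective f) (z : k) (b : B) :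
    pInl f g (f z) = pInr f g b ↔ g z = b := by
  rw [pInl_eq_pInr_iff g hf]
  exact ⟨fun ⟨_, hz, hb⟩ => hf hz ▸ hb, fun hb => ⟨z, rfl, hb⟩⟩

theorem compGenus_pInr [Fintype k] [Fintype A] [Fintype B] (hf : Injective f)
    (g1 : A → ℤ) (g2 : B → ℤ) (b : B) :
    compGenus f g g1 g2 (pInr f g b) = g2 b + ∑ z ∈ Finset.univ.filter (g · = b), g1 (f z) := by
  have hA : Finset.univ.filter (pInl f g · = pInr f g b) =
      (Finset.univ.filter (g · = b)).map ⟨f, hf⟩ := by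
    ext a
    simp only [Finset.mem_filter, Finset.mem_univ, true_and, Finset.mem_map,
      Embedding.coeFn_mk, pInl_eq_pInr_iff g hf]
    exact ⟨fun ⟨z, hz, hb⟩ => ⟨z, hb, hz⟩, fun ⟨z, hb, hz⟩ => ⟨z, hz, hb⟩⟩
  have hB : Finset.univ.filter (pInr f g · = pInr f g b) = {b} := by
    ext; simp [(pInr_injective g hf).eq_iff]
  have hk : Finset.univ.filter (fun z => pInl f g (f z) = pInr f g b) =
      Finset.univ.filter (g · = b) := by
    ext; simp [pInl_apply_eq_pInr_iff g hf]
  rw [compGenus, hA, hB, hk, Finset.sum_map, Finset.sum_singleton, Finset.sum_sub_distrib,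
    Finset.sum_const, nsmul_one]
  simp only [Embedding.coeFn_mk]
  ring

end Pushout

section Oriented

variable {m k n C : Type} {sm : m → Bool} {sk : k → Bool} {sn : n → Bool}
  {lm : m → C} {ln : n → C}

theorem IsOriented.exists_fiber_lm_eq_singleton (h : IsOriented sm sn lm ln)
    (hln : Injective ln) (z : n) : ∃ a, sm a = sn z ∧ ∀ x, lm x = ln z ↔ x = a := by
  rcases h (ln z) with ⟨-, -, -, -, -, -, hno⟩ | ⟨a, b, -, -, hab, hfib, -⟩ |
      ⟨a, b, hs, hlm, hln'⟩ | ⟨-, hno⟩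
  · exact absurd rfl (hno z)
  · exact absurd (hln (((hfib a).2 (.inl rfl)).trans ((hfib b).2 (.inr rfl)).symm)) hab
  · exact ⟨a, (hln' z).1 rfl ▸ hs, hlm⟩
  · exact absurd rfl (hno z)

theorem IsOriented.comap {C' : Type} {lm' : k → C'} {ln' : n → C'} (e : C' → C) {v : k → m}
    (hv : Injective v) (hsv : ∀ z, sm (v z) = sk z)
    (hlm : ∀ z c, lm (v z) = e c ↔ lm' z = c) (hrange : ∀ x c, lm x = e c → ∃ z, v z = x)
    (hln : ∀ y c, ln y = e c ↔ ln' y = c) (h : IsOriented sm sn lm ln) :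
    IsOriented sk sn lm' ln' := by
  intro c
  have hpt : ∀ x, lm x = e c → ∃ z, v z = x ∧ lm' z = c := fun x hx => by
    obtain ⟨z, rfl⟩ := hrange x c hx
    exact ⟨z, rfl, (hlm z c).1 hx⟩
  rcases h (e c) with ⟨a, b, ha, hb, hab, hfib, hno⟩ | ⟨a, b, ha, hb, hab, hfib, hno⟩ |
      ⟨a, b, hs, hfib, hfib'⟩ | ⟨hno, hno'⟩
  · obtain ⟨z₁, rfl, hz₁⟩ := hpt a ((hfib a).2 (.inl rfl))
    obtain ⟨z₂, rfl, hz₂⟩ := hpt b ((hfib b).2 (.inr rfl))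
    refine .inl ⟨z₁, z₂, hsv z₁ ▸ ha, hsv z₂ ▸ hb, fun h => hab (h ▸ rfl), fun z => ?_,
      fun y hy => hno y ((hln y c).2 hy)⟩
    rw [← hlm, hfib, hv.eq_iff, hv.eq_iff]
  · exact .inr <| .inl ⟨a, b, ha, hb, hab, fun y => (hln y c).symm.trans (hfib y),
      fun z hz => hno (v z) ((hlm z c).2 hz)⟩
  · obtain ⟨z, rfl, hz⟩ := hpt a ((hfib a).2 rfl)
    refine .inr <| .inr <| .inl ⟨z, b, hsv z ▸ hs, fun z' => ?_,
      fun y => (hln y c).symm.trans (hfib' y)⟩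
    rw [← hlm, hfib, hv.eq_iff]
  · exact .inr <| .inr <| .inr ⟨fun z hz => hno (v z) ((hlm z c).2 hz),
      fun y hy => hno' y ((hln y c).2 hy)⟩

end Oriented

theorem stmt_17_general {m k n : Type} [Fintype k]
    (sm : m → Bool) (sk : k → Bool) (sn : n → Bool)
    (ψ : Cob m k) (χ : Cob k n)
    (hψc : ψ.IsCofib)
    (hψg : ∀ a, ψ.g a = 0) (hψo : IsOriented sm sk ψ.lm ψ.ln)
    (hφg : ∀ x, (Cob.comp χ ψ).g x = 0)
    (hφo : IsOriented sm sn (Cob.comp χ ψ).lm (Cob.comp χ ψ).ln) :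
    (∀ b, χ.g b = 0) ∧ IsOriented sk sn χ.lm χ.ln := by
  obtain ⟨hψinj, -⟩ := hψc
  choose v hsv hv using hψo.exists_fiber_lm_eq_singleton hψinj
  have hvlm : ∀ z, ψ.lm (v z) = ψ.ln z := fun z => (hv z _).2 rfl
  have hvinj : Injective v := fun z z' h => hψinj (by rw [← hvlm, ← hvlm, h])
  refine ⟨fun c => ?_, hφo.comap (pInr ψ.ln χ.lm) hvinj hsv (fun z c => ?_) (fun x c hx => ?_)
    (fun y c => (pInr_injective χ.lm hψinj).eq_iff)⟩
  · simpa [Cob.comp, compGenus_pInr χ.lm hψinj, hψg] using hφg (pInr ψ.ln χ.lm c)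
  · simp only [Cob.comp, hvlm, pInl_apply_eq_pInr_iff χ.lm hψinj]
  · obtain ⟨z, hz, -⟩ := (pInl_eq_pInr_iff χ.lm hψinj _ _).1 hx
    exact ⟨z, ((hv z x).1 hz.symm).symm⟩

/-- Lemma 5.4.5: if a composite `φ = χ ∘ ψ` of cofibrations has both
`φ` and `ψ` in the image of `Φ` (genus zero and the oriented local conditions), then
`χ` is also in the image of `Φ`. -/
theorem stmt_17 {m k n : Type} [Fintype k]
    (sm : m → Bool) (sk : k → Bool) (sn : n → Bool)
    (ψ : Cob m k) (χ : Cob k n)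
    (hψc : ψ.IsCofib) (hχc : χ.IsCofib)
    (hψg : ∀ a, ψ.g a = 0) (hψo : IsOriented sm sk ψ.lm ψ.ln)
    (hφg : ∀ x, (Cob.comp χ ψ).g x = 0)
    (hφo : IsOriented sm sn (Cob.comp χ ψ).lm (Cob.comp χ ψ).ln) :
    (∀ b, χ.g b = 0) ∧ IsOriented sk sn χ.lm χ.ln :=
  stmt_17_general sm sk sn ψ χ hψc hψg hψo hφg hφo
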